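/- Let Ω₁ = ω × ℝ ⊂ ℝ³ with ω a bounded open set in ℝ², let ρ, s > 0, θ ∈ S¹, and let v ∈ C²_c(ℝ³) with support contained in the closure of Ω₁. Set P₂v := ∂²_{x₃} v and P₃v := 2(ρ - s(x'·θ)) θ·∇' v - 2s v, where ∇' = (∂_{x₁}, ∂_{x₂}) and θ·∇' = θ₁∂_{x₁} + θ₂∂_{x₂}. Then Re ∫_{Ω₁} (P₂v) (conj(P₃v)) dx = s ∫_{Ω₁} |∂_{x₃} v|² dx. -/

import Mathlib

/-! `v` vanishes on every vertical line over `ℝ² ∖ ω`, hence so do its `x₃`-derivatives, and both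
integrals may be taken over all of `ℝ³`. Integrating by parts in `x₃`, and using that the weight
`a = ρ - s x'·θ` does not depend on `x₃` and that `∂₃` commutes with `θ·∇'`, the left side becomes
`-∫ a (θ·∇')|∂₃v|² + 2s ∫ |∂₃v|²`. A second integration by parts, in the direction `θ`, where
`(θ·∇') a = -s |θ|² = -s`, turns the first term into `-s ∫ |∂₃v|²`. -/

open MeasureTheory Complex

noncomputable section

local notation "E" => (ℝ × ℝ) × ℝ

def e3 : (ℝ × ℝ) × ℝ := ((0, 0), 1)

open scoped RealInnerProductSpace
open Function

instance {G H : Type*} [AddGroup G] [TopologicalSpace G] [MeasureSpace G] [MeasurableAdd G]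
    [AddGroup H] [TopologicalSpace H] [MeasureSpace H] [MeasurableAdd H]
    [(volume : Measure G).IsAddHaarMeasure] [(volume : Measure H).IsAddHaarMeasure]
    [SFinite (volume : Measure G)] [SFinite (volume : Measure H)] :
    (volume : Measure (G × H)).IsAddHaarMeasure :=
  Measure.prod.instIsAddHaarMeasure _ _

theorem support_subset_of_subset_closure_of_eqOn_frontier {X M : Type*} [TopologicalSpace X]
    [Zero M] {f : X → M} {s : Set X} (hcl : support f ⊆ closure s)
    (hfr : Set.EqOn f 0 (frontier s)) : support f ⊆ s := by
  intro x hx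
  by_contra hxs
  exact hx (hfr ⟨hcl hx, fun hint => hxs (interior_subset hint)⟩)

theorem HasCompactSupport.bilinear_right {X F G W : Type*} [TopologicalSpace X]
    [NormedAddCommGroup F] [NormedSpace ℝ F] [NormedAddCommGroup G] [NormedSpace ℝ G]
    [NormedAddCommGroup W] [NormedSpace ℝ W] {f : X → F} {g : X → G} (B : F →L[ℝ] G →L[ℝ] W)
    (hg : HasCompactSupport g) : HasCompactSupport fun x => B (f x) (g x) :=
  hg.mono <| support_subset_iff'.2 fun x hx => by simp [notMem_support.1 hx]

section Calculus

variable {𝕜 V F : Type*} [NontriviallyNormedField 𝕜] [NormedAddCommGroup V] [NormedSpace 𝕜 V]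
  [NormedAddCommGroup F] [NormedSpace 𝕜 F]

theorem fderiv_apply_eq_zero_of_forall_add_smul_eq_zero {f : V → F} {x w : V}
    (h : ∀ t : 𝕜, f (x + t • w) = 0) : fderiv 𝕜 f x w = 0 := by
  by_cases hf : DifferentiableAt 𝕜 f x
  · rw [← hf.lineDeriv_eq_fderiv, lineDeriv, funext h, deriv_const]
  · simp [fderiv_zero_of_not_differentiableAt hf]

theorem support_fderiv_apply_subset {f : V → F} {s : Set V} {w : V}
    (hs : ∀ x ∉ s, ∀ t : 𝕜, x + t • w ∉ s) (hf : support f ⊆ s) :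
    support (fun x => fderiv 𝕜 f x w) ⊆ s := by
  intro x hx
  by_contra hxs
  exact hx (fderiv_apply_eq_zero_of_forall_add_smul_eq_zero fun t =>
    notMem_support.1 fun h => hs x hxs t (hf h))

theorem ContDiff.fderiv_apply_const {f : V → F} {m n : WithTop ℕ∞} (hf : ContDiff 𝕜 n f)
    (hmn : m + 1 ≤ n) (w : V) : ContDiff 𝕜 m fun x => fderiv 𝕜 f x w :=
  (hf.fderiv_right hmn).clm_apply contDiff_const

end Calculus

theorem ContDiffAt.fderiv_fderiv_apply_comm {V F : Type*} [NormedAddCommGroup V]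
    [NormedSpace ℝ V] [NormedAddCommGroup F] [NormedSpace ℝ F] {f : V → F} {x : V}
    (hf : ContDiffAt ℝ 2 f x) (v w : V) :
    fderiv ℝ (fun y => fderiv ℝ f y v) x w = fderiv ℝ (fun y => fderiv ℝ f y w) x v := by
  have hdf : DifferentiableAt ℝ (fderiv ℝ f) x :=
    (hf.fderiv_right (m := 1) le_rfl).differentiableAt one_ne_zero
  rw [fderiv_clm_apply hdf (differentiableAt_const v),
    fderiv_clm_apply hdf (differentiableAt_const w)]
  simpa using hf.isSymmSndFDerivAt (by simp [minSmoothness_of_isRCLikeNormedField]) w v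

theorem DifferentiableAt.fderiv_norm_sq_apply {V F : Type*} [NormedAddCommGroup V]
    [NormedSpace ℝ V] [NormedAddCommGroup F] [InnerProductSpace ℝ F] {f : V → F} {x : V}
    (hf : DifferentiableAt ℝ f x) (w : V) :
    fderiv ℝ (fun y => ‖f y‖ ^ 2) x w = 2 * ⟪f x, fderiv ℝ f x w⟫ := by
  simp [hf.hasFDerivAt.norm_sq.fderiv]

theorem integral_bilinear_fderiv_right_eq_neg_left_of_hasCompactSupport
    {V F G W : Type*} [NormedAddCommGroup V] [NormedSpace ℝ V] [FiniteDimensional ℝ V]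
    [MeasurableSpace V] [BorelSpace V] {μ : Measure V} [μ.IsAddHaarMeasure]
    [NormedAddCommGroup F] [NormedSpace ℝ F] [NormedAddCommGroup G] [NormedSpace ℝ G]
    [NormedAddCommGroup W] [NormedSpace ℝ W]
    (B : F →L[ℝ] G →L[ℝ] W) {f : V → F} {g : V → G} (hf : ContDiff ℝ 1 f) (hg : ContDiff ℝ 1 g)
    (hgc : HasCompactSupport g) (w : V) :
    ∫ x, B (f x) (fderiv ℝ g x w) ∂μ = -∫ x, B (fderiv ℝ f x w) (g x) ∂μ := by
  have hf' := (hf.fderiv_apply_const (m := 0) le_rfl w).continuous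
  have hg' := (hg.fderiv_apply_const (m := 0) le_rfl w).continuous
  refine integral_bilinear_fderiv_right_eq_neg_left_of_integrable ?_ ?_ ?_
    (fun x _ => hf.differentiable one_ne_zero x) (fun x _ => hg.differentiable one_ne_zero x)
  · exact (B.continuous₂.comp₂ hf' hg.continuous).integrable_of_hasCompactSupport
      (hgc.bilinear_right B)
  · exact (B.continuous₂.comp₂ hf.continuous hg').integrable_of_hasCompactSupport
      ((hgc.fderiv_apply ℝ w).bilinear_right B)
  · exact (B.continuous₂.comp₂ hf.continuous hg.continuous).integrable_of_hasCompactSupport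
      (hgc.bilinear_right B)

theorem fderiv_two_mul_smul_fderiv_sub_smul_apply {V F : Type*} [NormedAddCommGroup V]
    [NormedSpace ℝ V] [NormedAddCommGroup F] [NormedSpace ℝ F] {v : V → F} {a : V → ℝ} {x e u : V}
    {c : ℝ} (hv : ContDiff ℝ 2 v) (ha : DifferentiableAt ℝ a x)
    (hae : fderiv ℝ a x e = 0) :
    fderiv ℝ (fun y => (2 * a y) • fderiv ℝ v y u - (2 * c) • v y) x e =
      (2 * a x) • fderiv ℝ (fun y => fderiv ℝ v y e) x u - (2 * c) • fderiv ℝ v x e := by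
  have hg := (hv.fderiv_apply_const (m := 1) le_rfl u).differentiable one_ne_zero x
  have hvx := hv.differentiable two_ne_zero x
  have hC : HasFDerivAt (fun y => (2 * a y) • fderiv ℝ v y u - (2 * c) • v y) _ x :=
    ((ha.hasFDerivAt.const_mul 2).smul hg.hasFDerivAt).sub (hvx.hasFDerivAt.const_smul (2 * c))
  simp [hC.fderiv, hae, hv.contDiffAt.fderiv_fderiv_apply_comm]

section CrossTerm

variable {V : Type*} [NormedAddCommGroup V] [NormedSpace ℝ V] [FiniteDimensional ℝ V]
  [MeasurableSpace V] [BorelSpace V] {μ : Measure V} [μ.IsAddHaarMeasure]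
  {a : V → ℝ} {e u : V} {c : ℝ}

theorem integral_inner_fderiv_fderiv_eq_mul_integral_norm_sq_fderiv {F : Type*}
    [NormedAddCommGroup F] [InnerProductSpace ℝ F] {v : V → F} (hv : ContDiff ℝ 2 v)
    (hvc : HasCompactSupport v) (ha : ContDiff ℝ 1 a)
    (hae : ∀ x, fderiv ℝ a x e = 0) (hau : ∀ x, fderiv ℝ a x u = -c) :
    ∫ x, ⟪(2 * a x) • fderiv ℝ v x u - (2 * c) • v x,
        fderiv ℝ (fun y => fderiv ℝ v y e) x e⟫ ∂μ =
      c * ∫ x, ‖fderiv ℝ v x e‖ ^ 2 ∂μ := by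
  set f := fun y => fderiv ℝ v y e
  set g := fun y => fderiv ℝ v y u
  set N := fun y => ‖f y‖ ^ 2
  have hf : ContDiff ℝ 1 f := hv.fderiv_apply_const le_rfl e
  have hg : ContDiff ℝ 1 g := hv.fderiv_apply_const le_rfl u
  have hfc : HasCompactSupport f := hvc.fderiv_apply ℝ e
  have hN : ContDiff ℝ 1 N := hf.norm_sq ℝ
  have hNc : HasCompactSupport N := hfc.comp_left (g := fun z : F => ‖z‖ ^ 2) (by simp)
  have hC : ContDiff ℝ 1 fun x => (2 * a x) • g x - (2 * c) • v x :=
    ((contDiff_const.mul ha).smul hg).sub (contDiff_const.smul (hv.of_le one_le_two))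
  have hDC : ∀ x, fderiv ℝ (fun x => (2 * a x) • g x - (2 * c) • v x) x e =
      (2 * a x) • fderiv ℝ f x u - (2 * c) • f x := fun x =>
    fderiv_two_mul_smul_fderiv_sub_smul_apply hv (ha.differentiable one_ne_zero x) (hae x)
  have hinner : ∀ x, ⟪(2 * a x) • fderiv ℝ f x u - (2 * c) • f x, f x⟫ =
      a x * fderiv ℝ N x u - 2 * c * N x := by
    intro x
    rw [(hf.differentiable one_ne_zero x).fderiv_norm_sq_apply, inner_sub_left,
      real_inner_smul_left, real_inner_smul_left, real_inner_self_eq_norm_sq, real_inner_comm]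
    ring
  have hweight : ∫ x, a x * fderiv ℝ N x u ∂μ = c * ∫ x, N x ∂μ := by
    have hibp := integral_bilinear_fderiv_right_eq_neg_left_of_hasCompactSupport (μ := μ)
      (ContinuousLinearMap.mul ℝ ℝ) ha hN hNc u
    simpa only [ContinuousLinearMap.mul_apply', hau, neg_mul, integral_neg, neg_neg,
      integral_const_mul] using hibp
  have hNu := (hN.fderiv_apply_const (m := 0) le_rfl u).continuous
  calc ∫ x, ⟪(2 * a x) • g x - (2 * c) • v x, fderiv ℝ f x e⟫ ∂μ
      = -∫ x, ⟪(2 * a x) • fderiv ℝ f x u - (2 * c) • f x, f x⟫ ∂μ := by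
        have hibp := integral_bilinear_fderiv_right_eq_neg_left_of_hasCompactSupport
          (μ := μ) (innerSL ℝ) hC hf hfc e
        simp only [hDC] at hibp
        exact hibp
    _ = -∫ x, (a x * fderiv ℝ N x u - 2 * c * N x) ∂μ := by simp_rw [hinner]
    _ = -(c * ∫ x, N x ∂μ - 2 * c * ∫ x, N x ∂μ) := by
        rw [integral_sub, hweight, integral_const_mul]
        · exact (ha.continuous.mul hNu).integrable_of_hasCompactSupport
            (hNc.fderiv_apply ℝ u).mul_left
        · exact (continuous_const.mul hN.continuous).integrable_of_hasCompactSupport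
            hNc.mul_left
    _ = c * ∫ x, N x ∂μ := by ring

theorem re_integral_fderiv_fderiv_mul_conj_eq_mul_integral_norm_sq_fderiv {v : V → ℂ}
    (hv : ContDiff ℝ 2 v) (hvc : HasCompactSupport v) (ha : ContDiff ℝ 1 a)
    (hae : ∀ x, fderiv ℝ a x e = 0) (hau : ∀ x, fderiv ℝ a x u = -c) :
    (∫ x, fderiv ℝ (fun y => fderiv ℝ v y e) x e *
        (starRingEnd ℂ) (2 * (a x : ℂ) * fderiv ℝ v x u - 2 * (c : ℂ) * v x) ∂μ).re =
      c * ∫ x, ‖fderiv ℝ v x e‖ ^ 2 ∂μ := by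
  have hDev := ((hv.fderiv_apply_const (m := 1) le_rfl e).fderiv_apply_const
    (m := 0) le_rfl e).continuous
  have hDuv := (hv.fderiv_apply_const (m := 0) (by norm_num) u).continuous
  have hint : Integrable (fun x => fderiv ℝ (fun y => fderiv ℝ v y e) x e *
      (starRingEnd ℂ) (2 * (a x : ℂ) * fderiv ℝ v x u - 2 * (c : ℂ) * v x)) μ :=
    (by fun_prop : Continuous _).integrable_of_hasCompactSupport
      ((hvc.fderiv_apply ℝ e).fderiv_apply ℝ e).mul_right
  refine (integral_re hint).symm.trans ?_
  convert integral_inner_fderiv_fderiv_eq_mul_integral_norm_sq_fderiv (μ := μ) hv hvc ha hae hau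
    using 3 with x
  · -- the real inner product structure of `ℂ` induces its standard `NormedSpace ℝ ℂ`
    rfl
  · simp [Complex.inner, Complex.real_smul]

end CrossTerm

theorem fderiv_const_sub_mul_dot_fst_apply (ρ s : ℝ) (θ : ℝ × ℝ) (x w : E) :
    fderiv ℝ (fun x : E => ρ - s * (x.1.1 * θ.1 + x.1.2 * θ.2)) x w =
      -(s * (w.1.1 * θ.1 + w.1.2 * θ.2)) := by
  have hx : HasFDerivAt (fun x : E => x.1) _ x := hasFDerivAt_fst (𝕜 := ℝ)
  have ha : HasFDerivAt (fun x : E => ρ - s * (x.1.1 * θ.1 + x.1.2 * θ.2)) _ x :=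
    ((hx.fst.mul_const θ.1).add (hx.snd.mul_const θ.2)).const_mul s |>.const_sub ρ
  simp only [ha.fderiv, neg_apply, smul_apply, add_apply, ContinuousLinearMap.comp_apply,
    ContinuousLinearMap.coe_fst', ContinuousLinearMap.coe_snd', smul_eq_mul]
  ring

theorem re_integral_P2_P3_general
    (ω : Set (ℝ × ℝ))
    (θ : ℝ × ℝ) (hθ : θ.1 ^ 2 + θ.2 ^ 2 = 1)
    (ρ s : ℝ)
    (v : E → ℂ)
    (hv : ContDiff ℝ 2 v) (hvsupp : HasCompactSupport v)
    (hvΩ : Function.support v ⊆ closure (ω ×ˢ (Set.univ : Set ℝ)))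
    (hv0 : ∀ x ∈ frontier (ω ×ˢ (Set.univ : Set ℝ)), v x = 0) :
    (∫ x in ω ×ˢ (Set.univ : Set ℝ),
        (fderiv ℝ (fun y => fderiv ℝ v y e3) x e3) *
          (starRingEnd ℂ)
            (2 * ((ρ - s * (x.1.1 * θ.1 + x.1.2 * θ.2) : ℝ) : ℂ) *
                fderiv ℝ v x ((θ.1, θ.2), 0) -
              2 * (s : ℂ) * v x)).re =
      s * ∫ x in ω ×ˢ (Set.univ : Set ℝ), ‖fderiv ℝ v x e3‖ ^ 2 := by
  have hvert : ∀ x ∉ ω ×ˢ Set.univ, ∀ t : ℝ, x + t • e3 ∉ ω ×ˢ (Set.univ : Set ℝ) := by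
    simp [e3]
  have hsupp₁ := support_fderiv_apply_subset hvert
    (support_subset_of_subset_closure_of_eqOn_frontier hvΩ hv0)
  have hsupp₂ := support_fderiv_apply_subset hvert hsupp₁
  rw [setIntegral_eq_integral_of_forall_compl_eq_zero
      fun x hx => by simp [notMem_support.1 (mt (@hsupp₂ x) hx)],
    setIntegral_eq_integral_of_forall_compl_eq_zero
      fun x hx => by simp [notMem_support.1 (mt (@hsupp₁ x) hx)]]
  refine re_integral_fderiv_fderiv_mul_conj_eq_mul_integral_norm_sq_fderiv hv hvsupp
    (by fun_prop) (fun x => ?_) (fun x => ?_)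
  · simp [fderiv_const_sub_mul_dot_fst_apply, e3]
  · rw [fderiv_const_sub_mul_dot_fst_apply]
    linear_combination -s * hθ

/-- for `v ∈ C²_c(ℝ³) ∩ H¹₀(Ω₁)` with `Ω₁ = ω × ℝ`,
`Re ∫_{Ω₁} (∂²_{x₃} v) conj(2(ρ - s x'·θ) θ·∇'v - 2sv) dx = s ∫_{Ω₁} |∂_{x₃} v|² dx`. -/
theorem re_integral_P2_P3
    (ω : Set (ℝ × ℝ)) (hω : IsOpen ω) (hωb : Bornology.IsBounded ω)
    (θ : ℝ × ℝ) (hθ : θ.1 ^ 2 + θ.2 ^ 2 = 1)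
    (ρ s : ℝ) (hρ : 0 < ρ) (hs : 0 < s)
    (v : E → ℂ)
    (hv : ContDiff ℝ 2 v) (hvsupp : HasCompactSupport v)
    (hvΩ : Function.support v ⊆ closure (ω ×ˢ (Set.univ : Set ℝ)))
    (hv0 : ∀ x ∈ frontier (ω ×ˢ (Set.univ : Set ℝ)), v x = 0) :
    (∫ x in ω ×ˢ (Set.univ : Set ℝ),
        (fderiv ℝ (fun y => fderiv ℝ v y e3) x e3) *
          (starRingEnd ℂ)
            (2 * ((ρ - s * (x.1.1 * θ.1 + x.1.2 * θ.2) : ℝ) : ℂ) *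
                fderiv ℝ v x ((θ.1, θ.2), 0) -
              2 * (s : ℂ) * v x)).re =
      s * ∫ x in ω ×ˢ (Set.univ : Set ℝ), ‖fderiv ℝ v x e3‖ ^ 2 :=
  re_integral_P2_P3_general ω θ hθ ρ s v hv hvsupp hvΩ hv0
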